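/- Let v be an introduce node with child u, I_v = I_u ⊎ {i}. Given c_v on I_v and F_v ⊆ E(H[I_v]), set F_u = F_v ∩ E(H[I_u]) and c_u(j) = c_v(j) - [{i,j} ∈ F_v] for j ∈ I_u. Then g(v,c_v,F_v) = ∞ if c_v(i) ≠ |{j ∈ I_u : {i,j} ∈ F_v}| or c_u(j) < 0 for some j; otherwise g(v,c_v,F_v) = g(u,c_u,F_u) + ∑_{j∈I_v} f_j(c_v(j)) - ∑_{j∈I_u} f_j(c_u(j)). -/

import Mathlib

/-- The degree of vertex `i` in `G`. -/
noncomputable def deg {n : ℕ} (G : SimpleGraph (Fin n)) (i : Fin n) : ℕ :=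
  (G.neighborSet i).ncard

/-- The edges of `G` both of whose endpoints lie in `S` (the edge set of `G[S]`). -/
def edgesIn {n : ℕ} (G : SimpleGraph (Fin n)) (S : Set (Fin n)) : Set (Sym2 (Fin n)) :=
  {e | e ∈ G.edgeSet ∧ ∀ i ∈ e, i ∈ S}

/-- `G` is a subgraph of the induced subgraph `H[S]` (viewed as a graph on all of `[n]`):
`G ≤ H` and all edges of `G` lie inside `S`. -/
def SubgraphOn {n : ℕ} (H G : SimpleGraph (Fin n)) (S : Set (Fin n)) : Prop :=
  G ≤ H ∧ ∀ ⦃a b : Fin n⦄, G.Adj a b → a ∈ S ∧ b ∈ S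

/-- A (rooted) tree decomposition of a graph `H` on `[n]`: a finite tree `T` with a root,
bags `bag v ⊆ [n]` covering all vertices, every edge of `H` contained in some bag, and for
every vertex `i` the nodes whose bag contains `i` forming a connected (path-closed) set. -/
structure TreeDecomp (n : ℕ) (H : SimpleGraph (Fin n)) where
  τ : Type
  [finτ : Fintype τ]
  tree : SimpleGraph τ
  isTree : tree.IsTree
  root : τ
  bag : τ → Set (Fin n)
  bag_cover : ∀ i : Fin n, ∃ v, i ∈ bag v
  bag_edge : ∀ ⦃i j : Fin n⦄, H.Adj i j → ∃ v, i ∈ bag v ∧ j ∈ bag v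
  bag_conn : ∀ (i : Fin n) (x y : τ) (p : tree.Walk x y), p.IsPath →
    i ∈ bag x → i ∈ bag y → ∀ v ∈ p.support, i ∈ bag v

namespace TreeDecomp

variable {n : ℕ} {H : SimpleGraph (Fin n)} (td : TreeDecomp n H)

/-- `u` lies in the subtree rooted at `v`: every walk from the root to `u` passes `v`. -/
def desc (v u : td.τ) : Prop := ∀ p : td.tree.Walk td.root u, v ∈ p.support

/-- `u` is a child of `v` in the rooted tree. -/
def child (v u : td.τ) : Prop := td.tree.Adj v u ∧ td.desc v u

/-- `I(T_v)`: the union of all bags over the subtree rooted at `v`. -/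
def bags (v : td.τ) : Set (Fin n) := {i | ∃ u, td.desc v u ∧ i ∈ td.bag u}

end TreeDecomp

open SimpleGraph

namespace TreeDecomp
variable {n : ℕ} {H : SimpleGraph (Fin n)} (td : TreeDecomp n H)

lemma path_support_subset {x y : td.τ} (p W : td.tree.Walk x y) (hp : p.IsPath) :
    p.support ⊆ W.support := by
  classical
  have h2 : (⟨p, hp⟩ : td.tree.Path x y) = ⟨W.bypass, W.bypass_isPath⟩ :=
    td.isTree.2.path_unique _ _
  have h3 : p.support = W.bypass.support := by
    have := congrArg (fun q : td.tree.Path x y => q.1.support) h2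
    simpa using this
  rw [h3]; exact W.support_bypass_subset

lemma desc_of_path {v x : td.τ} (p : td.tree.Walk td.root x) (hp : p.IsPath)
    (hv : v ∈ p.support) : td.desc v x := fun W =>
  td.path_support_subset p W hp hv

lemma exists_path (x y : td.τ) : ∃ p : td.tree.Walk x y, p.IsPath := by
  classical
  obtain ⟨W⟩ := td.isTree.isConnected.preconnected x y
  exact ⟨W.bypass, W.bypass_isPath⟩

lemma desc_refl (v : td.τ) : td.desc v v := fun p => p.end_mem_support

lemma desc_trans {a b c : td.τ} (hab : td.desc a b) (hbc : td.desc b c) :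
    td.desc a c := by
  classical
  intro W
  have hb : b ∈ W.support := hbc W
  exact W.support_takeUntil_subset hb (hab (W.takeUntil b hb))

lemma not_end_mem_takeUntil [DecidableEq td.τ] {x y z : td.τ}
    (p : td.tree.Walk x y) (hp : p.IsPath) (hz : z ∈ p.support) (hne : z ≠ y) :
    y ∉ (p.takeUntil z hz).support := by
  classical
  have hspec := p.take_spec hz
  have hsupp : p.support = (p.takeUntil z hz).support ++ (p.dropUntil z hz).support.tail := by
    conv_lhs => rw [← hspec]
    exact Walk.support_append _ _
  have hnd : p.support.Nodup := hp.support_nodup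
  rw [hsupp] at hnd
  have hy : y ∈ (p.dropUntil z hz).support.tail := by
    have h1 : y ∈ (p.dropUntil z hz).support := (p.dropUntil z hz).end_mem_support
    rw [(p.dropUntil z hz).support_eq_cons, List.mem_cons] at h1
    rcases h1 with h1 | h1
    · exact absurd h1.symm hne
    · exact h1
  intro hyt
  exact (List.disjoint_of_nodup_append hnd) hyt hy

end TreeDecomp
namespace TreeDecomp
variable {n : ℕ} {H : SimpleGraph (Fin n)} (td : TreeDecomp n H)
variable {v u : td.τ} {i : Fin n}

lemma i_not_bags (hu : td.child v u) (hi : i ∉ td.bag u)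
    (hbag : td.bag v = insert i (td.bag u)) : i ∉ td.bags u := by
  classical
  rintro ⟨w, hw, hiw⟩
  have hiv : i ∈ td.bag v := by rw [hbag]; exact Set.mem_insert _ _
  obtain ⟨q, hq⟩ := td.exists_path td.root u
  have hvq : v ∈ q.support := hu.2 q
  have hur : u ∉ (q.takeUntil v hvq).support :=
    td.not_end_mem_takeUntil q hq hvq hu.1.ne
  obtain ⟨p, hp⟩ := td.exists_path v w
  have hup : u ∈ p.support := by
    by_contra hnot
    have hw' := hw ((q.takeUntil v hvq).append p)
    rw [Walk.mem_support_append_iff] at hw'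
    tauto
  exact hi (td.bag_conn i v w p hp hiv hiw u hup)

lemma desc_step (hu : td.child v u) (honly : ∀ x, td.child v x → x = u)
    {w : td.τ} (hw : td.desc v w) (hne : w ≠ v) : td.desc u w := by
  classical
  obtain ⟨q, hq⟩ := td.exists_path td.root w
  have hvq : v ∈ q.support := hw q
  obtain ⟨x, hadj, s', hcons⟩ := Walk.exists_eq_cons_of_ne (Ne.symm hne) (q.dropUntil v hvq)
  have hsupp : q.support = (q.takeUntil v hvq).support ++ (q.dropUntil v hvq).support.tail := by
    conv_lhs => rw [← q.take_spec hvq]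
    exact Walk.support_append _ _
  have hxtail : x ∈ (q.dropUntil v hvq).support.tail := by
    rw [hcons]; simp
  have hnd : q.support.Nodup := hq.support_nodup
  have hxnot : x ∉ (q.takeUntil v hvq).support := by
    rw [hsupp] at hnd
    exact fun hmem => (List.disjoint_of_nodup_append hnd) hmem hxtail
  have hW : ((q.takeUntil v hvq).concat hadj).IsPath := by
    rw [Walk.isPath_def, Walk.support_concat]
    exact List.Nodup.append (hq.takeUntil hvq).support_nodup (List.nodup_singleton x)
      (by simpa [List.disjoint_singleton] using hxnot)
  have hdx : td.desc v x := td.desc_of_path _ hW (by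
    rw [Walk.support_concat]
    simp [List.concat_eq_append, (q.takeUntil v hvq).end_mem_support])
  have hx : x = u := honly x ⟨hadj, hdx⟩
  have huq : u ∈ q.support := by
    rw [hsupp]
    exact List.mem_append.2 (Or.inr (hx ▸ hxtail))
  exact td.desc_of_path q hq huq

lemma bags_eq (hu : td.child v u) (honly : ∀ x, td.child v x → x = u)
    (hbag : td.bag v = insert i (td.bag u)) :
    td.bags v = insert i (td.bags u) := by
  ext j
  constructor
  · rintro ⟨w, hw, hjw⟩
    by_cases hwv : w = v
    · subst hwv
      rw [hbag] at hjw
      rcases hjw with rfl | hjw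
      · exact Set.mem_insert _ _
      · exact Set.mem_insert_iff.2 (Or.inr ⟨u, td.desc_refl u, hjw⟩)
    · exact Set.mem_insert_iff.2 (Or.inr ⟨w, td.desc_step hu honly hw hwv, hjw⟩)
  · rintro (rfl | ⟨w, hw, hjw⟩)
    · exact ⟨v, td.desc_refl v, by rw [hbag]; exact Set.mem_insert _ _⟩
    · exact ⟨w, td.desc_trans hu.2 hw, hjw⟩

lemma adj_mem_bag_u (hu : td.child v u) (hi : i ∉ td.bag u)
    (hbag : td.bag v = insert i (td.bag u))
    {j : Fin n} (hj : j ∈ td.bags u) (hadj : H.Adj i j) : j ∈ td.bag u := by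
  classical
  obtain ⟨w, hw, hjw⟩ := hj
  obtain ⟨w', hiw', hjw'⟩ := td.bag_edge hadj
  have hnd : ¬ td.desc u w' := fun h => td.i_not_bags hu hi hbag ⟨w', h, hiw'⟩
  rw [TreeDecomp.desc] at hnd; push_neg at hnd
  obtain ⟨W0, hW0⟩ := hnd
  obtain ⟨p, hp⟩ := td.exists_path w w'
  have hup : u ∈ p.support := by
    by_contra hnot
    have hmem := hw (W0.append p.reverse)
    rw [Walk.mem_support_append_iff] at hmem
    rcases hmem with h | h
    · exact hW0 h
    · rw [Walk.support_reverse] at h; exact hnot (List.mem_reverse.1 h)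
  exact td.bag_conn j w w' p hp hjw hjw' u hup

end TreeDecomp

section GraphOps
variable {n : ℕ}

/-- Delete all edges incident to `i`. -/
private def eraseAt (G : SimpleGraph (Fin n)) (i : Fin n) : SimpleGraph (Fin n) where
  Adj a b := G.Adj a b ∧ a ≠ i ∧ b ≠ i
  symm := ⟨fun a b ⟨h, ha, hb⟩ => ⟨h.symm, hb, ha⟩⟩
  loopless := ⟨fun a ⟨h, _, _⟩ => G.irrefl h⟩

/-- Add to `G` the edges of `F` incident to `i`. -/
private def addStar (G : SimpleGraph (Fin n)) (i : Fin n) (F : Set (Sym2 (Fin n))) :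
    SimpleGraph (Fin n) where
  Adj a b := G.Adj a b ∨ (a ≠ b ∧ s(a, b) ∈ F ∧ (a = i ∨ b = i))
  symm := by
    constructor
    intro a b h
    rcases h with h | ⟨hab, hF, hio⟩
    · exact Or.inl h.symm
    · exact Or.inr ⟨hab.symm, by rwa [Sym2.eq_swap], hio.symm⟩
  loopless := by
    constructor
    intro a h
    rcases h with h | ⟨hab, _, _⟩
    exacts [G.irrefl h, hab rfl]

end GraphOps

section Main

open TreeDecomp

variable {n : ℕ} {H : SimpleGraph (Fin n)} {td : TreeDecomp n H}
variable {v u : td.τ} {i : Fin n} {c cu : Fin n → ℕ} {F : Set (Sym2 (Fin n))}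
variable (hu : td.child v u) (honly : ∀ x, td.child v x → x = u)
variable (hi : i ∉ td.bag u) (hbag : td.bag v = insert i (td.bag u))
variable (hF : F ⊆ edgesIn H (td.bag v))

section Fwd
variable {G : SimpleGraph (Fin n)}
variable (hG : SubgraphOn H G (td.bags v)) (hE : edgesIn G (td.bag v) = F)

include hu honly hi hbag hG hE

/-- The neighbours of `i` in a feasible `G`. -/
lemma nbhd_i : G.neighborSet i = {j ∈ td.bag u | s(i, j) ∈ F} := by
  ext j
  constructor
  · intro (hadj : G.Adj i j)
    have hjv : j ∈ td.bags v := (hG.2 hadj).2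
    rw [td.bags_eq hu honly hbag] at hjv
    have hji : j ≠ i := fun h => (G.irrefl (v := i)) (h ▸ hadj)
    have hju : j ∈ td.bags u := hjv.resolve_left hji
    have hjb : j ∈ td.bag u := td.adj_mem_bag_u hu hi hbag hju (hG.1 hadj)
    refine ⟨hjb, ?_⟩
    rw [← hE]
    refine ⟨G.mem_edgeSet.2 hadj, ?_⟩
    intro x hx
    rcases Sym2.mem_iff.1 hx with rfl | rfl
    · rw [hbag]; exact Set.mem_insert _ _
    · rw [hbag]; exact Set.mem_insert_of_mem _ hjb
  · rintro ⟨hjb, hjF⟩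
    rw [← hE] at hjF
    exact G.mem_edgeSet.1 hjF.1

omit hu honly hi hbag hG in
lemma adj_iff_F {j : Fin n} (hjb : j ∈ td.bag u)
    (hbv : td.bag u ⊆ td.bag v) (hiv : i ∈ td.bag v) :
    G.Adj i j ↔ s(i, j) ∈ F := by
  constructor
  · intro hadj
    rw [← hE]
    refine ⟨G.mem_edgeSet.2 hadj, ?_⟩
    intro x hx
    rcases Sym2.mem_iff.1 hx with rfl | rfl
    · exact hiv
    · exact hbv hjb
  · intro hjF
    rw [← hE] at hjF
    exact G.mem_edgeSet.1 hjF.1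

end Fwd

end Main

section Main2

open TreeDecomp

variable {n : ℕ} {H : SimpleGraph (Fin n)} {td : TreeDecomp n H}
variable {v u : td.τ} {i : Fin n} {c cu : Fin n → ℕ} {F : Set (Sym2 (Fin n))}

private lemma eraseAt_adj {G : SimpleGraph (Fin n)} {a b : Fin n} :
    (eraseAt G i).Adj a b ↔ G.Adj a b ∧ a ≠ i ∧ b ≠ i := Iff.rfl

private lemma addStar_adj {G : SimpleGraph (Fin n)} {a b : Fin n} :
    (addStar G i F).Adj a b ↔ G.Adj a b ∨ (a ≠ b ∧ s(a, b) ∈ F ∧ (a = i ∨ b = i)) := Iff.rfl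

private lemma mem_edgesIn {G : SimpleGraph (Fin n)} {S : Set (Fin n)} {a b : Fin n} :
    s(a, b) ∈ edgesIn G S ↔ G.Adj a b ∧ a ∈ S ∧ b ∈ S := by
  constructor
  · rintro ⟨he, hmem⟩
    exact ⟨G.mem_edgeSet.1 he, hmem a (by simp), hmem b (by simp)⟩
  · rintro ⟨hadj, ha, hb⟩
    refine ⟨G.mem_edgeSet.2 hadj, fun x hx => ?_⟩
    rcases Sym2.mem_iff.1 hx with rfl | rfl <;> assumption

private lemma nbhd_erase {G : SimpleGraph (Fin n)} {j : Fin n} (hj : j ≠ i) :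
    (eraseAt G i).neighborSet j = G.neighborSet j \ {i} := by
  ext b
  simp only [SimpleGraph.mem_neighborSet, eraseAt_adj, Set.mem_diff, Set.mem_singleton_iff]
  tauto

private lemma deg_erase_of_adj {G : SimpleGraph (Fin n)} {j : Fin n} (hj : j ≠ i)
    (hadj : G.Adj i j) : deg (eraseAt G i) j + 1 = deg G j := by
  rw [deg, deg, nbhd_erase hj]
  exact Set.ncard_diff_singleton_add_one hadj.symm (Set.toFinite _)

private lemma deg_erase_of_not_adj {G : SimpleGraph (Fin n)} {j : Fin n} (hj : j ≠ i)
    (hnadj : ¬ G.Adj i j) : deg (eraseAt G i) j = deg G j := by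
  rw [deg, deg, nbhd_erase hj, Set.diff_singleton_eq_self (fun h => hnadj (SimpleGraph.mem_neighborSet _ _ _ |>.1 h).symm)]

variable (hu : td.child v u) (honly : ∀ x, td.child v x → x = u)
variable (hi : i ∉ td.bag u) (hbag : td.bag v = insert i (td.bag u))
variable (hF : F ⊆ edgesIn H (td.bag v))

section Fwd
variable {G : SimpleGraph (Fin n)}
variable (hG : SubgraphOn H G (td.bags v)) (hE : edgesIn G (td.bag v) = F)

include hu honly hi hbag hG hE

lemma erase_subgraphOn : SubgraphOn H (eraseAt G i) (td.bags u) := by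
  constructor
  · intro a b h
    exact hG.1 h.1
  · rintro a b ⟨h, ha, hb⟩
    have h2 := hG.2 h
    rw [td.bags_eq hu honly hbag] at h2
    exact ⟨(h2.1).resolve_left ha, (h2.2).resolve_left hb⟩

omit hu honly in
lemma erase_edges : edgesIn (eraseAt G i) (td.bag u) = F ∩ edgesIn H (td.bag u) := by
  have hsub : td.bag u ⊆ td.bag v := by rw [hbag]; exact Set.subset_insert _ _
  ext e
  induction e using Sym2.ind with
  | _ a b =>
    rw [Set.mem_inter_iff, mem_edgesIn, mem_edgesIn]
    constructor
    · rintro ⟨⟨hadj, hai, hbi⟩, ha, hb⟩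
      refine ⟨?_, hG.1 hadj, ha, hb⟩
      rw [← hE]
      exact mem_edgesIn.2 ⟨hadj, hsub ha, hsub hb⟩
    · rintro ⟨hFe, hHadj, ha, hb⟩
      rw [← hE] at hFe
      exact ⟨⟨(mem_edgesIn.1 hFe).1, fun h => hi (h ▸ ha), fun h => hi (h ▸ hb)⟩, ha, hb⟩

lemma erase_deg (hc : ∀ j ∈ td.bag v, deg G j = c j)
    (hcu : ∀ j ∈ td.bag u, (s(i, j) ∈ F → c j = cu j + 1) ∧ (s(i, j) ∉ F → cu j = c j)) :
    ∀ j ∈ td.bag u, deg (eraseAt G i) j = cu j := by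
  intro j hj
  have hsub : td.bag u ⊆ td.bag v := by rw [hbag]; exact Set.subset_insert _ _
  have hiv : i ∈ td.bag v := by rw [hbag]; exact Set.mem_insert _ _
  have hji : j ≠ i := fun h => hi (h ▸ hj)
  have hiff := adj_iff_F (td := td) (v := v) hE hj hsub hiv
  by_cases hin : s(i, j) ∈ F
  · have h1 : deg (eraseAt G i) j + 1 = deg G j := deg_erase_of_adj hji (hiff.2 hin)
    have h2 := (hcu j hj).1 hin
    have h3 := hc j (hsub hj)
    omega
  · have h1 : deg (eraseAt G i) j = deg G j :=
      deg_erase_of_not_adj hji (fun h => hin (hiff.1 h))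
    have h2 := (hcu j hj).2 hin
    have h3 := hc j (hsub hj)
    omega

lemma deg_erase_eq_off_bag {j : Fin n} (hj : j ∈ td.bags u) (hjb : j ∉ td.bag u) :
    deg (eraseAt G i) j = deg G j := by
  have hji : j ≠ i := fun h => td.i_not_bags hu hi hbag (h ▸ hj)
  refine deg_erase_of_not_adj hji (fun h => hjb ?_)
  have := nbhd_i hu honly hi hbag hG hE (G := G)
  have hmem : j ∈ G.neighborSet i := h
  rw [this] at hmem
  exact hmem.1

lemma deg_i_eq (hc : ∀ j ∈ td.bag v, deg G j = c j) :
    c i = {j ∈ td.bag u | s(i, j) ∈ F}.ncard := by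
  have hiv : i ∈ td.bag v := by rw [hbag]; exact Set.mem_insert _ _
  rw [← hc i hiv, deg, nbhd_i hu honly hi hbag hG hE]

omit hu honly hi in
lemma deg_pos_of_F (hc : ∀ j ∈ td.bag v, deg G j = c j)
    {j : Fin n} (hj : j ∈ td.bag u) (hjF : s(i, j) ∈ F) : 1 ≤ c j := by
  have hsub : td.bag u ⊆ td.bag v := by rw [hbag]; exact Set.subset_insert _ _
  have hiv : i ∈ td.bag v := by rw [hbag]; exact Set.mem_insert _ _
  have hadj : G.Adj i j := (adj_iff_F (td := td) (v := v) hE hj hsub hiv).2 hjF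
  have : i ∈ G.neighborSet j := hadj.symm
  have hne : (G.neighborSet j).Nonempty := ⟨i, this⟩
  have := Set.ncard_pos (Set.toFinite _) |>.2 hne
  rw [← hc j (hsub hj), deg]
  omega

end Fwd

end Main2

section Main3

open TreeDecomp

variable {n : ℕ} {H : SimpleGraph (Fin n)} {td : TreeDecomp n H}
variable {v u : td.τ} {i : Fin n} {c cu : Fin n → ℕ} {F : Set (Sym2 (Fin n))}
variable (hu : td.child v u) (honly : ∀ x, td.child v x → x = u)
variable (hi : i ∉ td.bag u) (hbag : td.bag v = insert i (td.bag u))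
variable (hF : F ⊆ edgesIn H (td.bag v))

section Bwd
variable {G' : SimpleGraph (Fin n)}
variable (hG' : SubgraphOn H G' (td.bags u))
variable (hE' : edgesIn G' (td.bag u) = F ∩ edgesIn H (td.bag u))

include hu hi hbag hG' in
lemma no_i_adj : ∀ b, ¬ G'.Adj i b := fun _ h =>
  td.i_not_bags hu hi hbag ((hG'.2 h).1)

include hu honly hi hbag hF hG' in
lemma addStar_subgraphOn : SubgraphOn H (addStar G' i F) (td.bags v) := by
  have hFH : ∀ ⦃a b : Fin n⦄, s(a, b) ∈ F → H.Adj a b ∧ a ∈ td.bag v ∧ b ∈ td.bag v :=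
    fun a b h => mem_edgesIn.1 (hF h)
  have hbv : td.bag v ⊆ td.bags v := fun x hx => ⟨v, td.desc_refl v, hx⟩
  have hbu : td.bags u ⊆ td.bags v := by
    rw [td.bags_eq hu honly hbag]; exact Set.subset_insert _ _
  constructor
  · intro a b h
    rcases h with h | ⟨hne, hmem, _⟩
    · exact hG'.1 h
    · exact (hFH hmem).1
  · rintro a b (h | ⟨hne, hmem, _⟩)
    · exact ⟨hbu (hG'.2 h).1, hbu (hG'.2 h).2⟩
    · exact ⟨hbv (hFH hmem).2.1, hbv (hFH hmem).2.2⟩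

include hu hi hbag hF hG' hE' in
lemma addStar_edges : edgesIn (addStar G' i F) (td.bag v) = F := by
  ext e
  induction e using Sym2.ind with
  | _ a b =>
    rw [mem_edgesIn]
    constructor
    · rintro ⟨hadj, ha, hb⟩
      rcases hadj with h | ⟨hne, hmem, _⟩
      · have hai : a ≠ i := fun hh => td.i_not_bags hu hi hbag (hh ▸ (hG'.2 h).1)
        have hbi : b ≠ i := fun hh => td.i_not_bags hu hi hbag (hh ▸ (hG'.2 h).2)
        have hau : a ∈ td.bag u := by
          rw [hbag] at ha; exact ha.resolve_left hai
        have hbu : b ∈ td.bag u := by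
          rw [hbag] at hb; exact hb.resolve_left hbi
        have hmm : s(a, b) ∈ edgesIn G' (td.bag u) := mem_edgesIn.2 ⟨h, hau, hbu⟩
        rw [hE'] at hmm
        exact hmm.1
      · exact hmem
    · intro hmem
      obtain ⟨hadj, ha, hb⟩ := mem_edgesIn.1 (hF hmem)
      refine ⟨?_, ha, hb⟩
      by_cases hia : a = i ∨ b = i
      · exact Or.inr ⟨hadj.ne, hmem, hia⟩
      · push_neg at hia
        have hau : a ∈ td.bag u := by rw [hbag] at ha; exact ha.resolve_left hia.1
        have hbu : b ∈ td.bag u := by rw [hbag] at hb; exact hb.resolve_left hia.2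
        have hmm : s(a, b) ∈ edgesIn G' (td.bag u) := by
          rw [hE']
          exact ⟨hmem, mem_edgesIn.2 ⟨hadj, hau, hbu⟩⟩
        exact Or.inl ((mem_edgesIn.1 hmm).1)

include hu hi hbag hF hG' in
lemma nbhd_addStar_i : (addStar G' i F).neighborSet i = {j ∈ td.bag u | s(i, j) ∈ F} := by
  ext b
  constructor
  · intro h
    rcases (h : (addStar G' i F).Adj i b) with h' | ⟨hne, hmem, _⟩
    · exact absurd h' (no_i_adj hu hi hbag hG' b)
    · obtain ⟨_, _, hbv⟩ := mem_edgesIn.1 (hF hmem)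
      rw [hbag] at hbv
      exact ⟨hbv.resolve_left (Ne.symm hne), hmem⟩
  · rintro ⟨hbu, hmem⟩
    exact (Or.inr ⟨fun h => hi (h ▸ hbu), hmem, Or.inl rfl⟩ : (addStar G' i F).Adj i b)

include hu hi hbag hG' in
lemma nbhd_addStar_of_F {j : Fin n} (hj : j ≠ i) (hmF : s(i, j) ∈ F) :
    (addStar G' i F).neighborSet j = insert i (G'.neighborSet j) := by
  have hswap : s(j, i) = s(i, j) := Sym2.eq_swap
  ext b
  constructor
  · intro h
    rcases (h : (addStar G' i F).Adj j b) with h' | ⟨hne, hmem, hio⟩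
    · exact Set.mem_insert_of_mem _ h'
    · rcases hio with rfl | rfl
      · exact absurd rfl hj
      · exact Set.mem_insert _ _
  · intro h
    rcases Set.mem_insert_iff.1 h with h1 | h'
    · refine (Or.inr ⟨?_, ?_, Or.inr h1⟩ : (addStar G' i F).Adj j b)
      · rw [h1]; exact hj
      · rw [h1, hswap]; exact hmF
    · exact (Or.inl h' : (addStar G' i F).Adj j b)

include hu hi hbag hG' in
lemma nbhd_addStar_not_F {j : Fin n} (hj : j ≠ i) (hmF : s(i, j) ∉ F) :
    (addStar G' i F).neighborSet j = G'.neighborSet j := by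
  have hswap : s(j, i) = s(i, j) := Sym2.eq_swap
  ext b
  constructor
  · intro h
    rcases (h : (addStar G' i F).Adj j b) with h' | ⟨hne, hmem, hio⟩
    · exact h'
    · rcases hio with rfl | rfl
      · exact absurd rfl hj
      · exact absurd (hswap ▸ hmem) hmF
  · exact fun h => (Or.inl h : (addStar G' i F).Adj j b)

include hu hi hbag hG' in
lemma deg_addStar_of_F {j : Fin n} (hj : j ≠ i) (hmF : s(i, j) ∈ F) :
    deg (addStar G' i F) j = deg G' j + 1 := by
  rw [deg, nbhd_addStar_of_F hu hi hbag hG' hj hmF, deg]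
  exact Set.ncard_insert_of_notMem
    (fun h => no_i_adj hu hi hbag hG' j ((SimpleGraph.mem_neighborSet _ _ _ |>.1 h).symm))
    (Set.toFinite _)

include hu hi hbag hG' in
lemma deg_addStar_not_F {j : Fin n} (hj : j ≠ i) (hmF : s(i, j) ∉ F) :
    deg (addStar G' i F) j = deg G' j := by
  rw [deg, nbhd_addStar_not_F hu hi hbag hG' hj hmF, deg]

end Bwd

end Main3

section Main4

open TreeDecomp

variable {n : ℕ} {H : SimpleGraph (Fin n)} {td : TreeDecomp n H}
variable {v u : td.τ} {i : Fin n} {c cu : Fin n → ℕ} {F : Set (Sym2 (Fin n))}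
variable (hu : td.child v u) (honly : ∀ x, td.child v x → x = u)
variable (hi : i ∉ td.bag u) (hbag : td.bag v = insert i (td.bag u))
variable (hF : F ⊆ edgesIn H (td.bag v))
variable {G' : SimpleGraph (Fin n)}
variable (hG' : SubgraphOn H G' (td.bags u))

include hu hi hbag hF hG' in
lemma deg_addStar_bag (hc' : ∀ j ∈ td.bag u, deg G' j = cu j)
    (hcu : ∀ j ∈ td.bag u, (s(i, j) ∈ F → c j = cu j + 1) ∧ (s(i, j) ∉ F → cu j = c j))
    (hci : c i = {j ∈ td.bag u | s(i, j) ∈ F}.ncard) :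
    ∀ j ∈ td.bag v, deg (addStar G' i F) j = c j := by
  intro j hj
  rw [hbag] at hj
  rcases Set.mem_insert_iff.1 hj with h1 | hj
  · rw [h1, deg, nbhd_addStar_i hu hi hbag hF hG', ← hci]
  · have hji : j ≠ i := fun h => hi (h ▸ hj)
    by_cases hmF : s(i, j) ∈ F
    · rw [deg_addStar_of_F hu hi hbag hG' hji hmF, hc' j hj]
      exact ((hcu j hj).1 hmF).symm
    · rw [deg_addStar_not_F hu hi hbag hG' hji hmF, hc' j hj]
      exact (hcu j hj).2 hmF

include hu hi hbag hF hG' in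
lemma deg_addStar_off {j : Fin n} (hj : j ∈ td.bags u) (hjb : j ∉ td.bag u) :
    deg (addStar G' i F) j = deg G' j := by
  have hji : j ≠ i := fun h => td.i_not_bags hu hi hbag (h ▸ hj)
  refine deg_addStar_not_F hu hi hbag hG' hji (fun hmF => ?_)
  obtain ⟨_, _, hjv⟩ := mem_edgesIn.1 (hF hmF)
  rw [hbag] at hjv
  exact hjb (hjv.resolve_left hji)

end Main4

private lemma sum_helper {α : Type} [DecidableEq α] (Tu Bu : Finset α) (i : α)
    (hiT : i ∉ Tu) (hiB : i ∉ Bu) (hsub : Bu ⊆ Tu) (g g' cz cz' : α → ℤ)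
    (h1 : g i = cz i)
    (h2 : ∀ j ∈ Tu, j ∉ Bu → g j = g' j)
    (h3 : ∀ j ∈ Bu, g j = cz j) (h4 : ∀ j ∈ Bu, g' j = cz' j) :
    ∑ j ∈ insert i Tu, g j + ∑ j ∈ Bu, cz' j
      = ∑ j ∈ Tu, g' j + ∑ j ∈ insert i Bu, cz j := by
  have e0 : ∑ j ∈ insert i Tu, g j = g i + ∑ j ∈ Tu, g j := Finset.sum_insert hiT
  have e1 : ∑ j ∈ insert i Bu, cz j = cz i + ∑ j ∈ Bu, cz j := Finset.sum_insert hiB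
  have e2 : ∑ j ∈ Tu \ Bu, g j + ∑ j ∈ Bu, g j = ∑ j ∈ Tu, g j := Finset.sum_sdiff hsub
  have e3 : ∑ j ∈ Tu \ Bu, g' j + ∑ j ∈ Bu, g' j = ∑ j ∈ Tu, g' j := Finset.sum_sdiff hsub
  have e4 : ∑ j ∈ Tu \ Bu, g j = ∑ j ∈ Tu \ Bu, g' j :=
    Finset.sum_congr rfl
      (fun j hj => h2 j (Finset.mem_sdiff.1 hj).1 (Finset.mem_sdiff.1 hj).2)
  have e5 : ∑ j ∈ Bu, g j = ∑ j ∈ Bu, cz j := Finset.sum_congr rfl h3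
  have e6 : ∑ j ∈ Bu, g' j = ∑ j ∈ Bu, cz' j := Finset.sum_congr rfl h4
  linarith

private lemma sInf_corr (S T : Set (WithTop ℤ)) (a b : ℤ)
    (hTfin : T.Finite)
    (fwd : ∀ x ∈ S, ∃ zx zy : ℤ, x = (zx : WithTop ℤ) ∧ (zy : WithTop ℤ) ∈ T ∧ zx + a = zy + b)
    (bwd : ∀ y ∈ T, ∃ zy zx : ℤ, y = (zy : WithTop ℤ) ∧ (zx : WithTop ℤ) ∈ S ∧ zx + a = zy + b) :
    sInf S + (a : WithTop ℤ) = sInf T + (b : WithTop ℤ) := by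
  rcases T.eq_empty_or_nonempty with rfl | hTne
  · have hS : S = ∅ := by
      rw [Set.eq_empty_iff_forall_notMem]
      intro x hx
      obtain ⟨zx, zy, _, hzy, _⟩ := fwd x hx
      exact Set.notMem_empty _ hzy
    rw [hS, WithTop.sInf_empty, top_add, top_add]
  · obtain ⟨m, hmT, hmin⟩ := T.exists_min_image id hTfin hTne
    obtain ⟨zm, zx0, hm, hx0S, heq⟩ := bwd m hmT
    have hSleast : IsLeast S (zx0 : WithTop ℤ) := by
      refine ⟨hx0S, fun x hx => ?_⟩
      obtain ⟨zx, zy, rfl, hzy, he⟩ := fwd x hx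
      have h1 : (zm : WithTop ℤ) ≤ (zy : WithTop ℤ) := hm ▸ hmin _ hzy
      have h2 : zm ≤ zy := WithTop.coe_le_coe.1 h1
      exact WithTop.coe_le_coe.2 (by omega)
    have hTleast : IsLeast T m := ⟨hmT, fun y hy => hmin y hy⟩
    rw [hSleast.csInf_eq, hTleast.csInf_eq, hm, ← WithTop.coe_add, ← WithTop.coe_add]
    exact_mod_cast heq

/-- `g(v, c, F)`: the minimum of `∑_{i ∈ I(T_v)} f i (d_i(G))` over subgraphs
`G ⊆ H[I(T_v)]` with `E(G[I_v]) = F` and `d_i(G) = c i` for all `i ∈ I_v`,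
with the convention that the minimum over the empty set is `∞`. -/
noncomputable def gval {n : ℕ} {H : SimpleGraph (Fin n)} (td : TreeDecomp n H)
    (f : Fin n → ℕ → ℤ) (v : td.τ) (c : Fin n → ℕ) (F : Set (Sym2 (Fin n))) :
    WithTop ℤ :=
  sInf {x : WithTop ℤ | ∃ G : SimpleGraph (Fin n), SubgraphOn H G (td.bags v) ∧
    edgesIn G (td.bag v) = F ∧ (∀ i ∈ td.bag v, deg G i = c i) ∧
    x = ((∑ i ∈ (Set.toFinite (td.bags v)).toFinset, f i (deg G i) : ℤ) : WithTop ℤ)}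

/-- Recursion at an introduce node `v` with single child `u`, `I_v = I_u ⊎ {i}`:
with `F_u = F ∩ E(H[I_u])` and `c_u j = c j - [{i,j} ∈ F]`, if
`c i ≠ |{j ∈ I_u : {i,j} ∈ F}|` or some `c_u j` would be negative then `g(v,c,F) = ∞`;
otherwise `g(v,c,F) = g(u,c_u,F_u) + ∑_{j ∈ I_v} f j (c j) - ∑_{j ∈ I_u} f j (c_u j)`
(stated additively to avoid subtraction in `WithTop ℤ`). -/
theorem gval_introduce {n : ℕ} {H : SimpleGraph (Fin n)} (td : TreeDecomp n H)
    (f : Fin n → ℕ → ℤ) (v u : td.τ) (hu : td.child v u)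
    (honly : ∀ x, td.child v x → x = u)
    (i : Fin n) (hi : i ∉ td.bag u) (hbag : td.bag v = insert i (td.bag u))
    (c : Fin n → ℕ) (F : Set (Sym2 (Fin n))) (hF : F ⊆ edgesIn H (td.bag v)) :
    ((c i ≠ {j ∈ td.bag u | s(i, j) ∈ F}.ncard ∨ ∃ j ∈ td.bag u, s(i, j) ∈ F ∧ c j = 0) →
      gval td f v c F = ⊤) ∧
    (∀ cu : Fin n → ℕ,
      (∀ j ∈ td.bag u, (s(i, j) ∈ F → c j = cu j + 1) ∧ (s(i, j) ∉ F → cu j = c j)) →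
      c i = {j ∈ td.bag u | s(i, j) ∈ F}.ncard →
      gval td f v c F + ((∑ j ∈ (Set.toFinite (td.bag u)).toFinset, f j (cu j) : ℤ) : WithTop ℤ) =
        gval td f u cu (F ∩ edgesIn H (td.bag u)) +
          ((∑ j ∈ (Set.toFinite (td.bag v)).toFinset, f j (c j) : ℤ) : WithTop ℤ)) := by

  classical
  have hiv : i ∈ td.bag v := by rw [hbag]; exact Set.mem_insert _ _
  have hsubB : td.bag u ⊆ td.bag v := by rw [hbag]; exact Set.subset_insert _ _
  constructor
  · intro hcond
    unfold gval
    have hempty : {x : WithTop ℤ | ∃ G : SimpleGraph (Fin n), SubgraphOn H G (td.bags v) ∧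
        edgesIn G (td.bag v) = F ∧ (∀ j ∈ td.bag v, deg G j = c j) ∧
        x = ((∑ j ∈ (Set.toFinite (td.bags v)).toFinset, f j (deg G j) : ℤ) : WithTop ℤ)}
        = ∅ := by
      rw [Set.eq_empty_iff_forall_notMem]
      rintro x ⟨G, hG, hE, hc, rfl⟩
      rcases hcond with h1 | ⟨j, hj, hjF, hcj⟩
      · exact h1 (deg_i_eq hu honly hi hbag hG hE hc)
      · have := deg_pos_of_F hbag hG hE hc hj hjF
        omega
    rw [hempty]
    exact WithTop.sInf_empty
  · intro cu hcu hci
    unfold gval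
    have hTveq : (Set.toFinite (td.bags v)).toFinset
        = insert i (Set.toFinite (td.bags u)).toFinset := by
      ext j
      simp only [Set.Finite.mem_toFinset, Finset.mem_insert, td.bags_eq hu honly hbag,
        Set.mem_insert_iff]
    have hBveq : (Set.toFinite (td.bag v)).toFinset
        = insert i (Set.toFinite (td.bag u)).toFinset := by
      ext j
      simp only [Set.Finite.mem_toFinset, Finset.mem_insert, hbag, Set.mem_insert_iff]
    have hiT : i ∉ (Set.toFinite (td.bags u)).toFinset := by
      rw [Set.Finite.mem_toFinset]; exact td.i_not_bags hu hi hbag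
    have hiB : i ∉ (Set.toFinite (td.bag u)).toFinset := by
      rw [Set.Finite.mem_toFinset]; exact hi
    have hsubT : (Set.toFinite (td.bag u)).toFinset ⊆ (Set.toFinite (td.bags u)).toFinset := by
      intro j hj
      rw [Set.Finite.mem_toFinset] at hj ⊢
      exact ⟨u, td.desc_refl u, hj⟩
    apply sInf_corr
    · refine Set.Finite.subset (Set.finite_range
        (fun G : SimpleGraph (Fin n) =>
          ((∑ j ∈ (Set.toFinite (td.bags u)).toFinset, f j (deg G j) : ℤ) : WithTop ℤ))) ?_
      rintro x ⟨G, -, -, -, rfl⟩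
      exact ⟨G, rfl⟩
    · rintro x ⟨G, hG, hE, hc, rfl⟩
      refine ⟨_, _, rfl, ⟨eraseAt G i, erase_subgraphOn hu honly hi hbag hG hE,
        erase_edges hi hbag hG hE, erase_deg hu honly hi hbag hG hE hc hcu, rfl⟩, ?_⟩
      rw [hTveq, hBveq]
      exact sum_helper _ _ i hiT hiB hsubT _ _ _ _
        (congrArg (f i) (hc i hiv))
        (fun j hjT hjB => congrArg (f j)
          (deg_erase_eq_off_bag hu honly hi hbag hG hE
            ((Set.Finite.mem_toFinset _).1 hjT)
            (fun hh => hjB ((Set.Finite.mem_toFinset _).2 hh))).symm)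
        (fun j hj => congrArg (f j) (hc j (hsubB ((Set.Finite.mem_toFinset _).1 hj))))
        (fun j hj => congrArg (f j)
          (erase_deg hu honly hi hbag hG hE hc hcu j ((Set.Finite.mem_toFinset _).1 hj)))
    · rintro y ⟨G', hG', hE', hc', rfl⟩
      refine ⟨_, _, rfl, ⟨addStar G' i F, addStar_subgraphOn hu honly hi hbag hF hG',
        addStar_edges hu hi hbag hF hG' hE',
        deg_addStar_bag hu hi hbag hF hG' hc' hcu hci, rfl⟩, ?_⟩
      rw [hTveq, hBveq]
      exact sum_helper _ _ i hiT hiB hsubT _ _ _ _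
        (congrArg (f i) (deg_addStar_bag hu hi hbag hF hG' hc' hcu hci i hiv))
        (fun j hjT hjB => congrArg (f j)
          (deg_addStar_off hu hi hbag hF hG'
            ((Set.Finite.mem_toFinset _).1 hjT)
            (fun hh => hjB ((Set.Finite.mem_toFinset _).2 hh))))
        (fun j hj => congrArg (f j)
          (deg_addStar_bag hu hi hbag hF hG' hc' hcu hci j
            (hsubB ((Set.Finite.mem_toFinset _).1 hj))))
        (fun j hj => congrArg (f j) (hc' j ((Set.Finite.mem_toFinset _).1 hj)))
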